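/- Consider the contour of a configuration of the slice process and its oriented portion $\vec\gamma$ from $\gamma^+ = (X_t(1) + 1/2, 3/2)$ to $\gamma^- = (X_t(-1) + 1/2, -3/2)$. Then $\vec\gamma$ has exactly $G_t + 4$ vertices, and the number of right turns along $\vec\gamma$ minus the number of left turns equals 2. -/

import Mathlib

/-- Configuration of the slice process determined by the rightmost-1 positions `X`:
vertex `(v₁, v₂)` is in state 1 iff `|v₂| ≤ 1` (the vertex lies in the slice
`S₃ = ℤ × {-1,0,1}`) and `v₁ ≤ X v₂`. -/
def sliceState (X : ℤ → ℤ) (v : ℤ × ℤ) : Bool := decide (|v.2| ≤ 1 ∧ v.1 ≤ X v.2)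

/-- Number of state-1 vertices in the `2 × 2` square with lower-left corner `p`. -/
noncomputable def sliceOnes (X : ℤ → ℤ) (p : ℤ × ℤ) : ℕ :=
  ((Finset.Icc p (p + (1, 1))).filter fun v => sliceState X v = true).card

/-- Effect on the rightmost-1 positions of the majority rule update (ties going to state 1)
of the `2 × 2` square with lower-left corner `p`, with the two modifications defining the
slice process: vertices outside the slice are frozen in state 0 (so a square is filled with
1's only if it lies in the slice, i.e. `p.2 ∈ {-1, 0}`) and updates placing a 1 to the right
of a 0 in the same row are suppressed (the square is filled with 1's only if every vertex to
its left in both of its rows is in state 1, i.e. `X r ≥ p.1 - 1` for both rows). -/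
noncomputable def sliceUpdate (X : ℤ → ℤ) (p : ℤ × ℤ) : ℤ → ℤ :=
  if sliceOnes X p < 2 then
    fun r => if r = p.2 ∨ r = p.2 + 1 then min (X r) (p.1 - 1) else X r
  else if (p.2 = -1 ∨ p.2 = 0) ∧ p.1 - 1 ≤ X p.2 ∧ p.1 - 1 ≤ X (p.2 + 1) then
    fun r => if r = p.2 ∨ r = p.2 + 1 then max (X r) (p.1 + 1) else X r
  else X

/-- The sum `Σ = X(-1) + X(0) + X(1)` of the three rightmost-1 positions. -/
def sliceSum (X : ℤ → ℤ) : ℤ := X (-1) + X 0 + X 1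

/-- The drift `D(Σ)` of the sum: since every `2 × 2` square is updated at rate one, it is the
sum over all squares of the change of `Σ` produced by the update of that square. -/
noncomputable def sumDrift (X : ℤ → ℤ) : ℤ :=
  ∑ᶠ p : ℤ × ℤ, (sliceSum (sliceUpdate X p) - sliceSum X)

/-- The finite oriented portion of the contour of the slice configuration from
`γ⁺ = (X(1) + 1/2, 3/2)` to `γ⁻ = (X(-1) + 1/2, -3/2)`, described by the set of dual lattice
points on it.  A dual point `c + (1/2, 1/2)` (coded by `c ∈ ℤ²`) lies on the contour iff its
four primal nearest neighbors `c, c + e₁, c + e₂, c + e₁ + e₂` are not all in the same state,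
i.e. `1 ≤ sliceOnes X c ≤ 3`; the portion `γ` consists of the contour points without the two
infinite horizontal rays, namely the points `(c₁ + 1/2, 3/2)` with `c₁ < X(1)` and the points
`(c₁ + 1/2, -3/2)` with `c₁ < X(-1)`. -/
def gammaPath (X : ℤ → ℤ) : Set (ℤ × ℤ) :=
  {c : ℤ × ℤ | 1 ≤ sliceOnes X c ∧ sliceOnes X c ≤ 3 ∧
    ¬ (c.2 = 1 ∧ c.1 < X 1) ∧ ¬ (c.2 = -2 ∧ c.1 < X (-1))}

/-!
Only the rows `y ∈ {1, 0, -1, -2}` of dual points `(x, y)` see state-1 vertices. In the two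
outer rows `γ` is the single point at the rightmost 1 of row `1` (resp. `-1`), a right turn.
In a middle row, between rows with rightmost 1's at `a` and `b`, the `2 × 2` neighborhoods hold
three 1's at `x = min a b`, one at `x = max a b` and two in between (two at the single point if
`a = b`), so that row contributes `|a - b| + 1` points and as many right as left turns.
-/

open Finset

-- the number of state-1 sites among `x, x + 1` in a row whose rightmost 1 is at `a`
def rowOnes (a x : ℤ) : ℕ := (if x ≤ a then 1 else 0) + (if x + 1 ≤ a then 1 else 0)

lemma rowOnes_le_two (a x : ℤ) : rowOnes a x ≤ 2 := by
  unfold rowOnes; split_ifs <;> omega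

lemma one_le_rowOnes_iff {a x : ℤ} : 1 ≤ rowOnes a x ↔ x ≤ a := by
  unfold rowOnes; split_ifs <;> omega

lemma rowOnes_self (a : ℤ) : rowOnes a a = 1 := by
  simp [rowOnes]

lemma rowOnes_add_mem_Icc_iff {a b x : ℤ} :
    (1 ≤ rowOnes a x + rowOnes b x ∧ rowOnes a x + rowOnes b x ≤ 3) ↔
      x ∈ Icc (min a b) (max a b) := by
  rw [mem_Icc]; unfold rowOnes; split_ifs <;> omega

lemma rowOnes_add_eq_one_iff {a b x : ℤ} :
    rowOnes a x + rowOnes b x = 1 ↔ x ∈ ({max a b} : Finset ℤ) \ {min a b} := by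
  simp only [mem_sdiff, mem_singleton]; unfold rowOnes; split_ifs <;> omega

lemma rowOnes_add_eq_three_iff {a b x : ℤ} :
    rowOnes a x + rowOnes b x = 3 ↔ x ∈ ({min a b} : Finset ℤ) \ {max a b} := by
  simp only [mem_sdiff, mem_singleton]; unfold rowOnes; split_ifs <;> omega

lemma sliceOnes_eq (X : ℤ → ℤ) (x y : ℤ) :
    sliceOnes X (x, y) =
      (if |y| ≤ 1 then rowOnes (X y) x else 0) +
        (if |y + 1| ≤ 1 then rowOnes (X (y + 1)) x else 0) := by
  have hsq : Icc ((x, y) : ℤ × ℤ) ((x, y) + (1, 1)) =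
      {(x, y), (x + 1, y), (x, y + 1), (x + 1, y + 1)} := by
    ext ⟨u, v⟩
    simp only [mem_Icc, Prod.le_def, Prod.mk_add_mk, mem_insert, mem_singleton, Prod.ext_iff]
    omega
  rw [sliceOnes, hsq, card_filter, sum_insert (by simp), sum_insert (by simp),
    sum_insert (by simp), sum_singleton]
  simp only [sliceState, decide_eq_true_eq, rowOnes]
  split_ifs <;> omega

lemma sliceOnes_of_far (X : ℤ → ℤ) {x y : ℤ} (hy : y < -2 ∨ 1 < y) : sliceOnes X (x, y) = 0 := by
  rw [sliceOnes_eq, if_neg (by rw [abs_le]; omega), if_neg (by rw [abs_le]; omega)]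

lemma sliceOnes_one (X : ℤ → ℤ) (x : ℤ) : sliceOnes X (x, 1) = rowOnes (X 1) x := by
  norm_num [sliceOnes_eq]

lemma sliceOnes_zero (X : ℤ → ℤ) (x : ℤ) :
    sliceOnes X (x, 0) = rowOnes (X 0) x + rowOnes (X 1) x := by
  norm_num [sliceOnes_eq]

lemma sliceOnes_neg_one (X : ℤ → ℤ) (x : ℤ) :
    sliceOnes X (x, -1) = rowOnes (X (-1)) x + rowOnes (X 0) x := by
  norm_num [sliceOnes_eq]

lemma sliceOnes_neg_two (X : ℤ → ℤ) (x : ℤ) : sliceOnes X (x, -2) = rowOnes (X (-1)) x := by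
  norm_num [sliceOnes_eq]

def fourRows (s t u v : Finset ℤ) : Finset (ℤ × ℤ) :=
  s ×ˢ {1} ∪ t ×ˢ {0} ∪ u ×ˢ {-1} ∪ v ×ˢ {-2}

lemma mem_fourRows {s t u v : Finset ℤ} {x y : ℤ} :
    (x, y) ∈ fourRows s t u v ↔
      y = 1 ∧ x ∈ s ∨ y = 0 ∧ x ∈ t ∨ y = -1 ∧ x ∈ u ∨ y = -2 ∧ x ∈ v := by
  simp only [fourRows, mem_union, mem_product, mem_singleton]
  tauto

lemma card_fourRows (s t u v : Finset ℤ) :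
    #(fourRows s t u v) = #s + #t + #u + #v := by
  have hrow {a b : ℤ} (h : a ≠ b) (s t : Finset ℤ) : Disjoint (s ×ˢ {a}) (t ×ˢ {b}) :=
    disjoint_product.2 (Or.inr (disjoint_singleton.2 h))
  rw [fourRows, card_union_of_disjoint, card_union_of_disjoint, card_union_of_disjoint,
    card_product, card_product, card_product, card_product]
  · simp
  all_goals
    try simp only [disjoint_union_left]
    and_intros <;> exact hrow (by decide) _ _

lemma gammaPath_eq (X : ℤ → ℤ) :
    gammaPath X = ↑(fourRows {X 1} (Icc (min (X 0) (X 1)) (max (X 0) (X 1)))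
      (Icc (min (X (-1)) (X 0)) (max (X (-1)) (X 0))) {X (-1)}) := by
  ext ⟨x, y⟩
  rw [mem_coe, mem_fourRows]
  obtain rfl | rfl | rfl | rfl | hy : y = 1 ∨ y = 0 ∨ y = -1 ∨ y = -2 ∨ (y < -2 ∨ 1 < y) := by
    omega
  · have := rowOnes_le_two (X 1) x
    simp [gammaPath, sliceOnes_one, one_le_rowOnes_iff]
    omega
  · simp only [gammaPath, Set.mem_ofPred_eq, sliceOnes_zero, ← rowOnes_add_mem_Icc_iff]
    norm_num
  · simp only [gammaPath, Set.mem_ofPred_eq, sliceOnes_neg_one, ← rowOnes_add_mem_Icc_iff]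
    norm_num
  · have := rowOnes_le_two (X (-1)) x
    simp [gammaPath, sliceOnes_neg_two, one_le_rowOnes_iff]
    omega
  · simp [gammaPath, sliceOnes_of_far X hy]
    omega

lemma rightTurns_eq (X : ℤ → ℤ) :
    {c ∈ gammaPath X | sliceOnes X c = 1} =
      ↑(fourRows {X 1} ({max (X 0) (X 1)} \ {min (X 0) (X 1)})
        ({max (X (-1)) (X 0)} \ {min (X (-1)) (X 0)}) {X (-1)}) := by
  ext ⟨x, y⟩
  rw [Set.mem_sep_iff, gammaPath_eq, mem_coe, mem_coe, mem_fourRows, mem_fourRows]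
  obtain rfl | rfl | rfl | rfl | hy : y = 1 ∨ y = 0 ∨ y = -1 ∨ y = -2 ∨ (y < -2 ∨ 1 < y) := by
    omega
  · norm_num [sliceOnes_one]
    rintro rfl
    exact rowOnes_self _
  · simp only [sliceOnes_zero, ← rowOnes_add_mem_Icc_iff, ← rowOnes_add_eq_one_iff]
    norm_num
    omega
  · simp only [sliceOnes_neg_one, ← rowOnes_add_mem_Icc_iff, ← rowOnes_add_eq_one_iff]
    norm_num
    omega
  · norm_num [sliceOnes_neg_two]
    rintro rfl
    exact rowOnes_self _
  · simp [sliceOnes_of_far X hy]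
    omega

lemma leftTurns_eq (X : ℤ → ℤ) :
    {c ∈ gammaPath X | sliceOnes X c = 3} =
      ↑(fourRows ∅ ({min (X 0) (X 1)} \ {max (X 0) (X 1)})
        ({min (X (-1)) (X 0)} \ {max (X (-1)) (X 0)}) ∅) := by
  ext ⟨x, y⟩
  rw [Set.mem_sep_iff, gammaPath_eq, mem_coe, mem_coe, mem_fourRows, mem_fourRows]
  obtain rfl | rfl | rfl | rfl | hy : y = 1 ∨ y = 0 ∨ y = -1 ∨ y = -2 ∨ (y < -2 ∨ 1 < y) := by
    omega
  · have := rowOnes_le_two (X 1) x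
    norm_num [sliceOnes_one]
    omega
  · simp only [sliceOnes_zero, ← rowOnes_add_mem_Icc_iff, ← rowOnes_add_eq_three_iff]
    norm_num
    omega
  · simp only [sliceOnes_neg_one, ← rowOnes_add_mem_Icc_iff, ← rowOnes_add_eq_three_iff]
    norm_num
    omega
  · have := rowOnes_le_two (X (-1)) x
    norm_num [sliceOnes_neg_two]
    omega
  · simp [sliceOnes_of_far X hy]
    omega

theorem slice_contour_portion_general (X : ℤ → ℤ) :
    Nat.card (gammaPath X) = (X 1 - X 0).natAbs + (X (-1) - X 0).natAbs + 4 ∧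
    (Nat.card {c ∈ gammaPath X | sliceOnes X c = 1} : ℤ) -
      (Nat.card {c ∈ gammaPath X | sliceOnes X c = 3} : ℤ) = 2 := by
  rw [Nat.card_coe_set_eq, Nat.card_coe_set_eq, Nat.card_coe_set_eq, rightTurns_eq,
    leftTurns_eq, gammaPath_eq]
  simp only [Set.ncard_coe_finset, card_fourRows]
  constructor
  · simp only [Int.card_Icc, card_singleton]
    omega
  · rw [card_sdiff_comm (by simp), card_sdiff_comm (s := {max (X (-1)) (X 0)}) (by simp)]
    simp only [card_empty, card_singleton]
    omega

/-- The oriented portion `γ` of the contour of a slice-process configuration,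
from `γ⁺ = (X(1) + 1/2, 3/2)` to `γ⁻ = (X(-1) + 1/2, -3/2)`, has exactly `G + 4` vertices,
and the number of right turns (dual points whose `2 × 2` neighborhood contains exactly one
state-1 vertex) minus the number of left turns (exactly three state-1 vertices) equals 2. -/
theorem slice_contour_portion (X : ℤ → ℤ)
    (hmid : ¬ (X 0 < X (-1) ∧ X 0 < X 1)) :
    Nat.card (gammaPath X) = (X 1 - X 0).natAbs + (X (-1) - X 0).natAbs + 4 ∧
    (Nat.card {c ∈ gammaPath X | sliceOnes X c = 1} : ℤ) -
      (Nat.card {c ∈ gammaPath X | sliceOnes X c = 3} : ℤ) = 2 :=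
  slice_contour_portion_general X
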